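/- arXiv:2412.20673 — 3 statements merged into one kernel-verified Lean document; each statement's English description precedes it below -/
import Mathlib

section
/- Over F_2, for every natural number m, the polynomial (x1 - x2)^(2^(a+1)) in F_2[x1,x2,x3] is m-quasi-invariant, where a is the largest natural number with 2^a < 2m+1. -/
open MvPolynomial

def IsQuasiInvariant (m : ℕ) (K : MvPolynomial (Fin 3) (ZMod 2)) : Prop :=
  ∀ i j : Fin 3, i ≠ j →
    (X i - X j) ^ (2 * m + 1) ∣ K - rename (Equiv.swap i j) K

theorem pow_sub_quasiInvariant (m a : ℕ)
    (ha : 2 ^ a < 2 * m + 1) (ha' : ∀ b : ℕ, 2 ^ b < 2 * m + 1 → b ≤ a) :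
    IsQuasiInvariant m ((X 0 - X 1 : MvPolynomial (Fin 3) (ZMod 2)) ^ 2 ^ (a + 1)) := by
  intro i j hij
  have hN : 2 * m + 1 ≤ 2 ^ (a + 1) := by
    by_contra h
    push_neg at h
    exact absurd (ha' (a + 1) h) (by omega)
  have key : ∀ p q r : MvPolynomial (Fin 3) (ZMod 2), p - q = r →
      r ^ (2 * m + 1) ∣ p ^ 2 ^ (a + 1) - q ^ 2 ^ (a + 1) := by
    intro p q r h
    have h2 : p ^ 2 ^ (a + 1) - q ^ 2 ^ (a + 1) = r ^ 2 ^ (a + 1) := by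
      rw [CharTwo.sub_eq_add, ← add_pow_char_pow, ← CharTwo.sub_eq_add, h]
    rw [h2]
    exact pow_dvd_pow _ hN
  have hc : ∀ p q : MvPolynomial (Fin 3) (ZMod 2), p - q = q - p := by
    intro p q
    rw [CharTwo.sub_eq_add, CharTwo.sub_eq_add, add_comm]
  rw [map_pow, map_sub, rename_X, rename_X]
  fin_cases i <;> fin_cases j <;> simp [Equiv.swap_apply_def, Fin.ext_iff] at hij ⊢
  · rw [hc (X 1) (X 0), sub_self]; exact dvd_zero _
  · exact key _ _ _ (by ring)
  · rw [hc (X 1) (X 0), sub_self]; exact dvd_zero _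
  · rw [hc (X 1) (X 2)]; exact key _ _ _ (by ring)
  · rw [hc (X 2) (X 0)]; exact key _ _ _ (by ring)
  · exact key _ _ _ (by ring)
end

section
/- Over F_2, for every natural number m, the polynomial G = (x1^2·x2 + x2^2·x3 + x3^2·x1)·((x1-x2)(x1-x3)(x2-x3))^(2m) is m-quasi-invariant, and for every transposition s_{ij} in S_3, G + s_{ij}·G = ((x1-x2)(x1-x3)(x2-x3))^(2m+1). -/
open MvPolynomial

private abbrev R := MvPolynomial (Fin 3) (ZMod 2)

private lemma two_zero : (2 : R) = 0 := CharTwo.two_eq_zero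

private lemma fin3_cases : ∀ i : Fin 3, i = 0 ∨ i = 1 ∨ i = 2 := by decide

private lemma delta_inv (i j : Fin 3) (hij : i ≠ j) :
    rename (Equiv.swap i j) ((X 0 - X 1) * (X 0 - X 2) * (X 1 - X 2) : R)
      = (X 0 - X 1) * (X 0 - X 2) * (X 1 - X 2) := by
  rcases fin3_cases i with rfl | rfl | rfl <;> rcases fin3_cases j with rfl | rfl | rfl <;>
    simp_all [map_mul, map_sub, Equiv.swap_apply_def] <;>
    linear_combination (-((X 0 - X 1) * (X 0 - X 2) * (X 1 - X 2)) : R) * two_zero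

private lemma P_add (i j : Fin 3) (hij : i ≠ j) :
    ((X 0 ^ 2 * X 1 + X 1 ^ 2 * X 2 + X 2 ^ 2 * X 0 : R)
      + rename (Equiv.swap i j) (X 0 ^ 2 * X 1 + X 1 ^ 2 * X 2 + X 2 ^ 2 * X 0))
      = (X 0 - X 1) * (X 0 - X 2) * (X 1 - X 2) := by
  rcases fin3_cases i with rfl | rfl | rfl <;> rcases fin3_cases j with rfl | rfl | rfl <;>
    simp_all [map_mul, map_add, map_pow, Equiv.swap_apply_def] <;>
    linear_combination (X 0 * X 1 ^ 2 + X 0 ^ 2 * X 2 + X 1 * X 2 ^ 2 : R) * two_zero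

private lemma diff_dvd (i j : Fin 3) (hij : i ≠ j) :
    (X i - X j : R) ∣ (X 0 - X 1) * (X 0 - X 2) * (X 1 - X 2) := by
  rcases fin3_cases i with rfl | rfl | rfl <;> rcases fin3_cases j with rfl | rfl | rfl
  · exact absurd rfl hij
  · exact ⟨(X 0 - X 2) * (X 1 - X 2), by ring⟩
  · exact ⟨(X 0 - X 1) * (X 1 - X 2), by ring⟩
  · exact ⟨-((X 0 - X 2) * (X 1 - X 2)), by ring⟩
  · exact absurd rfl hij
  · exact ⟨(X 0 - X 1) * (X 0 - X 2), by ring⟩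
  · exact ⟨-((X 0 - X 1) * (X 1 - X 2)), by ring⟩
  · exact ⟨-((X 0 - X 1) * (X 0 - X 2)), by ring⟩
  · exact absurd rfl hij

theorem trivtriv_generator (m : ℕ) :
    let Δ : MvPolynomial (Fin 3) (ZMod 2) := (X 0 - X 1) * (X 0 - X 2) * (X 1 - X 2)
    let G : MvPolynomial (Fin 3) (ZMod 2) :=
      (X 0 ^ 2 * X 1 + X 1 ^ 2 * X 2 + X 2 ^ 2 * X 0) * Δ ^ (2 * m)
    IsQuasiInvariant m G ∧
      ∀ i j : Fin 3, i ≠ j → G + rename (Equiv.swap i j) G = Δ ^ (2 * m + 1) := by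
  intro Δ G
  have key : ∀ i j : Fin 3, i ≠ j → G + rename (Equiv.swap i j) G = Δ ^ (2 * m + 1) := by
    intro i j hij
    show (X 0 ^ 2 * X 1 + X 1 ^ 2 * X 2 + X 2 ^ 2 * X 0 : R)
        * ((X 0 - X 1) * (X 0 - X 2) * (X 1 - X 2)) ^ (2 * m)
        + rename (Equiv.swap i j) ((X 0 ^ 2 * X 1 + X 1 ^ 2 * X 2 + X 2 ^ 2 * X 0)
          * ((X 0 - X 1) * (X 0 - X 2) * (X 1 - X 2)) ^ (2 * m))
        = ((X 0 - X 1) * (X 0 - X 2) * (X 1 - X 2)) ^ (2 * m + 1)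
    rw [map_mul, map_pow, delta_inv i j hij, ← add_mul, P_add i j hij, pow_succ, mul_comm]
  refine ⟨?_, key⟩
  intro i j hij
  have h : G - rename (Equiv.swap i j) G = Δ ^ (2 * m + 1) := by
    rw [CharTwo.sub_eq_add]; exact key i j hij
  rw [h]
  exact pow_dvd_pow_of_dvd (diff_dvd i j hij) _
end

section
/- Over F_2, if K is m-quasi-invariant in F_2[x1,x2,x3] and (1 + s_{12})K = (1 + s_{13})K = (1 + s_{23})K (all equal to a common symmetric polynomial), then there is a symmetric polynomial P such that (1 + s_{ij})K = P · ((x1-x2)(x1-x3)(x2-x3))^(2m+1) for all transpositions s_{ij}. -/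
open MvPolynomial

lemma irred01 : Irreducible (X 0 - X 1 : MvPolynomial (Fin 3) (ZMod 2)) := by
  rw [← MulEquiv.irreducible_iff (MvPolynomial.finSuccEquiv (ZMod 2) 2)]
  have h1 : (1 : Fin 3) = Fin.succ 0 := rfl
  have : (MvPolynomial.finSuccEquiv (ZMod 2) 2) (X 0 - X 1) = Polynomial.X - Polynomial.C (X 0) := by
    rw [map_sub, h1, finSuccEquiv_X_zero, finSuccEquiv_X_succ]
  rw [this]
  exact Polynomial.irreducible_X_sub_C _

lemma irred_perm (σ : Equiv.Perm (Fin 3)) :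
    Irreducible (X (σ 0) - X (σ 1) : MvPolynomial (Fin 3) (ZMod 2)) := by
  rw [← MulEquiv.irreducible_iff (renameEquiv (ZMod 2) σ).symm]
  have : (renameEquiv (ZMod 2) σ).symm (X (σ 0) - X (σ 1)) = X 0 - X 1 := by
    simp [renameEquiv_symm, renameEquiv_apply, rename_X]
  rw [this]; exact irred01

lemma irredX (i j : Fin 3) (h : i ≠ j) :
    Irreducible (X i - X j : MvPolynomial (Fin 3) (ZMod 2)) := by
  obtain ⟨σ, h0, h1⟩ : ∃ σ : Equiv.Perm (Fin 3), σ 0 = i ∧ σ 1 = j := by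
    fin_cases i <;> fin_cases j <;> simp_all <;>
      first
      | exact ⟨Equiv.refl _, by decide, by decide⟩
      | exact ⟨Equiv.swap 0 1, by decide, by decide⟩
      | exact ⟨Equiv.swap 1 2, by decide, by decide⟩
      | exact ⟨Equiv.swap 0 2, by decide, by decide⟩
      | exact ⟨finRotate 3, by decide, by decide⟩
      | exact ⟨(finRotate 3)⁻¹, by decide, by decide⟩
  rw [← h0, ← h1]; exact irred_perm σ

lemma not_dvd_aux (i j k l : Fin 3) (v : Fin 3 → ZMod 2)
    (h1 : v i - v j = 0) (h2 : v k - v l = 1) :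
    ¬ (X i - X j : MvPolynomial (Fin 3) (ZMod 2)) ∣ (X k - X l) := by
  intro h
  have := map_dvd (eval v) h
  rw [map_sub, map_sub, eval_X, eval_X, eval_X, eval_X, h1, h2, zero_dvd_iff] at this
  exact one_ne_zero this

lemma relX (i j k l : Fin 3) (hij : i ≠ j) (v : Fin 3 → ZMod 2)
    (h1 : v i - v j = 0) (h2 : v k - v l = 1) :
    IsRelPrime (X i - X j : MvPolynomial (Fin 3) (ZMod 2)) (X k - X l) :=
  (irredX i j hij).isRelPrime_iff_not_dvd.mpr (not_dvd_aux i j k l v h1 h2)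

lemma D_perm (σ : Equiv.Perm (Fin 3)) :
    rename σ (((X 0 - X 1) * (X 0 - X 2) * (X 1 - X 2)) : MvPolynomial (Fin 3) (ZMod 2))
      = (X 0 - X 1) * (X 0 - X 2) * (X 1 - X 2) := by
  have key : ∀ a b c : Fin 3, a ≠ b → a ≠ c → b ≠ c →
      ((X a - X b) * (X a - X c) * (X b - X c) : MvPolynomial (Fin 3) (ZMod 2))
        = (X 0 - X 1) * (X 0 - X 2) * (X 1 - X 2) := by
    intro a b c hab hac hbc
    simp only [CharTwo.sub_eq_add]
    fin_cases a <;> fin_cases b <;> fin_cases c <;> simp_all <;> ring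
  simp only [map_mul, map_sub, rename_X]
  exact key _ _ _ (σ.injective.ne (by decide)) (σ.injective.ne (by decide))
    (σ.injective.ne (by decide))

theorem trivtriv_structure (m : ℕ) (K : MvPolynomial (Fin 3) (ZMod 2))
    (hK : IsQuasiInvariant m K)
    (h12 : K + rename (Equiv.swap (0 : Fin 3) 1) K
         = K + rename (Equiv.swap (0 : Fin 3) 2) K)
    (h13 : K + rename (Equiv.swap (0 : Fin 3) 2) K
         = K + rename (Equiv.swap (1 : Fin 3) 2) K)
    (hsym : (K + rename (Equiv.swap (0 : Fin 3) 1) K).IsSymmetric) :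
    ∃ P : MvPolynomial (Fin 3) (ZMod 2), P.IsSymmetric ∧
      ∀ i j : Fin 3, i ≠ j →
        K + rename (Equiv.swap i j) K
          = P * ((X 0 - X 1) * (X 0 - X 2) * (X 1 - X 2)) ^ (2 * m + 1) := by
  set n := 2 * m + 1 with hn
  set Q := K + rename (Equiv.swap (0 : Fin 3) 1) K with hQdef
  have hQeq : ∀ i j : Fin 3, i ≠ j → K + rename (Equiv.swap i j) K = Q := by
    intro i j hij
    fin_cases i <;> fin_cases j
    · exact absurd rfl hij
    · exact hQdef.symm
    · exact h12.symm
    · rw [Equiv.swap_comm]; exact hQdef.symm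
    · exact absurd rfl hij
    · exact (h12.trans h13).symm
    · rw [Equiv.swap_comm]; exact h12.symm
    · rw [Equiv.swap_comm]; exact (h12.trans h13).symm
    · exact absurd rfl hij
  have hd : ∀ i j : Fin 3, i ≠ j → ((X i - X j : MvPolynomial (Fin 3) (ZMod 2))) ^ n ∣ Q := by
    intro i j hij
    have h1 := hK i j hij
    have h2 : K - rename (Equiv.swap i j) K = Q := by
      rw [CharTwo.sub_eq_add]; exact hQeq i j hij
    rwa [h2] at h1
  have r12 : IsRelPrime ((X 0 - X 1 : MvPolynomial (Fin 3) (ZMod 2))) (X 0 - X 2) :=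
    relX 0 1 0 2 (by decide) ![0, 0, 1] (by decide) (by decide)
  have r13 : IsRelPrime ((X 0 - X 1 : MvPolynomial (Fin 3) (ZMod 2))) (X 1 - X 2) :=
    relX 0 1 1 2 (by decide) ![0, 0, 1] (by decide) (by decide)
  have r23 : IsRelPrime ((X 0 - X 2 : MvPolynomial (Fin 3) (ZMod 2))) (X 1 - X 2) :=
    relX 0 2 1 2 (by decide) ![1, 0, 1] (by decide) (by decide)
  have step1 : ((X 0 - X 1 : MvPolynomial (Fin 3) (ZMod 2))) ^ n * (X 0 - X 2) ^ n ∣ Q :=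
    (r12.pow).mul_dvd (hd 0 1 (by decide)) (hd 0 2 (by decide))
  have step2 : (((X 0 - X 1 : MvPolynomial (Fin 3) (ZMod 2))) ^ n * (X 0 - X 2) ^ n)
      * (X 1 - X 2) ^ n ∣ Q :=
    ((r13.pow).mul_left (r23.pow)).mul_dvd step1 (hd 1 2 (by decide))
  have hDdvd : (((X 0 - X 1) * (X 0 - X 2) * (X 1 - X 2)
      : MvPolynomial (Fin 3) (ZMod 2))) ^ n ∣ Q := by
    rw [mul_pow, mul_pow]; exact step2
  obtain ⟨P, hP⟩ := hDdvd
  have hD0 : (((X 0 - X 1) * (X 0 - X 2) * (X 1 - X 2) : MvPolynomial (Fin 3) (ZMod 2))) ≠ 0 :=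
    mul_ne_zero (mul_ne_zero (irredX 0 1 (by decide)).ne_zero (irredX 0 2 (by decide)).ne_zero)
      (irredX 1 2 (by decide)).ne_zero
  refine ⟨P, ?_, ?_⟩
  · intro σ
    have h1 : rename σ Q = Q := hsym σ
    rw [hP, map_mul, map_pow, D_perm σ] at h1
    exact mul_left_cancel₀ (pow_ne_zero _ hD0) h1
  · intro i j hij
    rw [hQeq i j hij, hP, mul_comm]
end
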